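/- arXiv:2208.05242 — 8 statements merged into one kernel-verified Lean document; each statement's English description precedes it below -/
import Mathlib

section
/- For every real b > 1 and every λ ∈ (0,1), ∫₀^λ t^{2b}/(1-t²)^b dt ≤ λ^{2b+1} / (2(b-1)(1-λ²)^{b-1}). -/
/-!
The function `F t = t ^ (2b+1) (1 - t²) ^ (1-b) / (2(b-1))` vanishes at `0`, equals the right-hand
side at `λ`, and has derivative `t ^ (2b) / (1 - t²) ^ b · (2b + 1 - 3t²) / (2(b-1))`. Since
`2b + 1 - 3t² = 2(b-1) + 3(1 - t²) ≥ 2(b-1)`, this derivative dominates the integrand on `(0, λ)`.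
-/

open Real Set

lemma continuousOn_rpow_mul_one_sub_sq_rpow {p q : ℝ} (hp : 0 ≤ p) :
    ContinuousOn (fun t : ℝ => t ^ p * (1 - t ^ 2) ^ q) (Ioo (-1) 1) := by
  refine fun t ht => ContinuousAt.continuousWithinAt ?_
  have hpos : 0 < 1 - t ^ 2 := by nlinarith [ht.1, ht.2]
  exact (continuousAt_rpow_const t p (Or.inr hp)).mul
    ((continuousAt_const.sub (continuousAt_id.pow 2)).rpow_const (Or.inl hpos.ne'))

lemma continuousOn_rpow_div_one_sub_sq_rpow {p q : ℝ} (hp : 0 ≤ p) :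
    ContinuousOn (fun t : ℝ => t ^ p / (1 - t ^ 2) ^ q) (Ioo (-1) 1) := by
  refine (continuousOn_rpow_mul_one_sub_sq_rpow (q := -q) hp).congr fun t ht => ?_
  have hpos : 0 < 1 - t ^ 2 := by nlinarith [ht.1, ht.2]
  simp only [rpow_neg hpos.le, div_eq_mul_inv]

lemma hasDerivAt_rpow_mul_one_sub_sq_rpow (b : ℝ) {t : ℝ} (ht0 : 0 < t) (ht1 : t < 1) :
    HasDerivAt (fun t : ℝ => t ^ (2 * b + 1) * (1 - t ^ 2) ^ (1 - b))
      (t ^ (2 * b) / (1 - t ^ 2) ^ b * (2 * b + 1 - 3 * t ^ 2)) t := by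
  have hpos : 0 < 1 - t ^ 2 := by nlinarith
  have hpow : HasDerivAt (fun t : ℝ => t ^ (2 * b + 1)) ((2 * b + 1) * t ^ (2 * b)) t := by
    simpa using hasDerivAt_rpow_const (p := 2 * b + 1) (Or.inl ht0.ne')
  have hbase : HasDerivAt (fun t : ℝ => 1 - t ^ 2) (-(2 * t)) t := by
    simpa using (hasDerivAt_pow 2 t).const_sub 1
  have hfactor : HasDerivAt (fun t : ℝ => (1 - t ^ 2) ^ (1 - b))
      (-(2 * t) * (1 - b) * (1 - t ^ 2) ^ (-b)) t := by
    simpa only [sub_sub_cancel_left] using hbase.rpow_const (p := 1 - b) (Or.inl hpos.ne')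
  refine (hpow.mul hfactor).congr_deriv ?_
  rw [show 1 - b = 1 + -b by ring, rpow_add hpos, rpow_one, rpow_add ht0,
    rpow_one, rpow_neg hpos.le, div_eq_mul_inv]
  ring

theorem integral_upper_bound (b : ℝ) (hb : 1 < b) (lam : ℝ) (hlam : lam ∈ Set.Ioo (0:ℝ) 1) :
    (∫ t in (0:ℝ)..lam, t ^ (2 * b) / (1 - t ^ 2) ^ b) ≤
      lam ^ (2 * b + 1) / (2 * (b - 1) * (1 - lam ^ 2) ^ (b - 1)) := by
  obtain ⟨hlam0, hlam1⟩ := hlam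
  have hsub : Icc 0 lam ⊆ Ioo (-1) 1 := fun t ht => ⟨by linarith [ht.1], ht.2.trans_lt hlam1⟩
  have hc : 0 < 2 * (b - 1) := by linarith
  have hdominates : ∀ t ∈ Ioo 0 lam, t ^ (2 * b) / (1 - t ^ 2) ^ b ≤
      t ^ (2 * b) / (1 - t ^ 2) ^ b * (2 * b + 1 - 3 * t ^ 2) / (2 * (b - 1)) := by
    intro t ⟨ht0, htlam⟩
    have hpos : 0 < 1 - t ^ 2 := by nlinarith
    rw [mul_div_assoc]
    refine le_mul_of_one_le_right (by positivity) ?_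
    rw [one_le_div hc]
    nlinarith
  have hlampos : 0 < 1 - lam ^ 2 := by nlinarith
  calc (∫ t in (0:ℝ)..lam, t ^ (2 * b) / (1 - t ^ 2) ^ b)
      ≤ lam ^ (2 * b + 1) * (1 - lam ^ 2) ^ (1 - b) / (2 * (b - 1))
        - 0 ^ (2 * b + 1) * (1 - 0 ^ 2) ^ (1 - b) / (2 * (b - 1)) :=
        intervalIntegral.integral_le_sub_of_hasDeriv_right_of_le hlam0.le
          (((continuousOn_rpow_mul_one_sub_sq_rpow (by linarith)).mono hsub).div_const _)
          (fun t ht => ((hasDerivAt_rpow_mul_one_sub_sq_rpow b ht.1 (ht.2.trans hlam1)).div_const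
            _).hasDerivWithinAt)
          (((continuousOn_rpow_div_one_sub_sq_rpow (by linarith)).mono hsub).integrableOn_Icc)
          hdominates
    _ = lam ^ (2 * b + 1) / (2 * (b - 1) * (1 - lam ^ 2) ^ (b - 1)) := by
        rw [zero_rpow (by linarith), show 1 - b = -(b - 1) by ring, rpow_neg hlampos.le]
        field_simp
        ring
end

section
/- For every real a > 0 and every x ∈ (0,1), ∫₀^x t^{2a}/(1-t²)^{a+1} dt ≤ x^{2a+1} / (2a(1-x²)^a). -/
/-! `F t = t ^ (2a+1) (1 - t²) ^ (-a) / (2a)` vanishes at `0`, equals the right-hand side at `x`,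
and has derivative `f t · (2a + 1 - t²) / (2a) ≥ f t`, where `f` is the integrand, because `t² < 1`.
Integrating this derivative bound over `[0, x]` gives the inequality. -/

open Real Set MeasureTheory intervalIntegral

lemma hasDerivAt_rpow_mul_one_sub_sq_rpow_neg (b c : ℝ) {t : ℝ} (ht : t ∈ Ioo (0 : ℝ) 1) :
    HasDerivAt (fun s : ℝ => s ^ (b + 1) * (1 - s ^ 2) ^ (-c))
      (t ^ b * (1 - t ^ 2) ^ (-c - 1) * ((b + 1) * (1 - t ^ 2) + 2 * c * t ^ 2)) t := by
  have ht0 : t ≠ 0 := ht.1.ne'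
  have hu : 1 - t ^ 2 ≠ 0 := by nlinarith [ht.1, ht.2]
  have hpow : HasDerivAt (fun s : ℝ => s ^ (b + 1)) ((b + 1) * t ^ b) t := by
    simpa using hasDerivAt_rpow_const (p := b + 1) (Or.inl ht0)
  have hsq : HasDerivAt (fun s : ℝ => 1 - s ^ 2) (-(2 * t)) t := by
    simpa using (hasDerivAt_pow 2 t).const_sub 1
  refine (hpow.mul (hsq.rpow_const (p := -c) (Or.inl hu))).congr_deriv ?_
  rw [rpow_add_one ht0, show -c = -c - 1 + 1 by ring, rpow_add_one hu,
    show -c - 1 + 1 - 1 = -c - 1 by ring]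
  ring

lemma rpow_div_one_sub_sq_rpow_le {a t : ℝ} (ha : 0 < a) (ht : t ∈ Ioo (0 : ℝ) 1) :
    t ^ (2 * a) / (1 - t ^ 2) ^ (a + 1) ≤
      t ^ (2 * a) * (1 - t ^ 2) ^ (-a - 1) * ((2 * a + 1) * (1 - t ^ 2) + 2 * a * t ^ 2) /
        (2 * a) := by
  have hu : 0 < 1 - t ^ 2 := by nlinarith [ht.1, ht.2]
  have hf : 0 ≤ t ^ (2 * a) * (1 - t ^ 2) ^ (-a - 1) :=
    mul_nonneg (rpow_nonneg ht.1.le _) (rpow_nonneg hu.le _)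
  rw [div_eq_mul_inv, ← rpow_neg hu.le, neg_add', le_div_iff₀ (by positivity)]
  nlinarith [ht.1, ht.2]

lemma one_sub_sq_pos_of_mem_Icc {x t : ℝ} (hx : x < 1) (ht : t ∈ Icc 0 x) : 0 < 1 - t ^ 2 := by
  nlinarith [ht.1, ht.2]

lemma continuousOn_one_sub_sq_rpow {x : ℝ} (hx : x < 1) (p : ℝ) :
    ContinuousOn (fun t : ℝ => (1 - t ^ 2) ^ p) (Icc 0 x) :=
  (continuousOn_const.sub (continuousOn_pow 2)).rpow_const fun _ ht =>
    Or.inl (one_sub_sq_pos_of_mem_Icc hx ht).ne'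

theorem integral_upper_bound' (a : ℝ) (ha : 0 < a) (x : ℝ) (hx : x ∈ Set.Ioo (0:ℝ) 1) :
    (∫ t in (0:ℝ)..x, t ^ (2 * a) / (1 - t ^ 2) ^ (a + 1)) ≤
      x ^ (2 * a + 1) / (2 * a * (1 - x ^ 2) ^ a) := by
  set F : ℝ → ℝ := fun t => t ^ (2 * a + 1) * (1 - t ^ 2) ^ (-a) / (2 * a)
  have hF_cont : ContinuousOn F (Icc 0 x) :=
    ((continuousOn_id.rpow_const fun _ _ => Or.inr (by positivity)).mul
      (continuousOn_one_sub_sq_rpow hx.2 _)).div_const _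
  have hf_int : IntegrableOn (fun t : ℝ => t ^ (2 * a) / (1 - t ^ 2) ^ (a + 1)) (Icc 0 x) :=
    ((continuousOn_id.rpow_const fun _ _ => Or.inr (by positivity)).div
      (continuousOn_one_sub_sq_rpow hx.2 _) fun _ ht =>
        (rpow_pos_of_pos (one_sub_sq_pos_of_mem_Icc hx.2 ht) _).ne').integrableOn_Icc
  have hF_sub : F x - F 0 = x ^ (2 * a + 1) / (2 * a * (1 - x ^ 2) ^ a) := by
    simp only [F, zero_rpow (by positivity : 2 * a + 1 ≠ 0), zero_mul, zero_div, sub_zero,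
      rpow_neg (one_sub_sq_pos_of_mem_Icc hx.2 ⟨hx.1.le, le_rfl⟩).le]
    field_simp
  rw [← hF_sub]
  refine integral_le_sub_of_hasDeriv_right_of_le hx.1.le hF_cont (fun t ht => ?_) hf_int
    fun t ht => rpow_div_one_sub_sq_rpow_le ha ⟨ht.1, ht.2.trans hx.2⟩
  exact ((hasDerivAt_rpow_mul_one_sub_sq_rpow_neg (2 * a) a
    ⟨ht.1, ht.2.trans hx.2⟩).div_const (2 * a)).hasDerivWithinAt
end

section
/- For every nonnegative integer n, the polynomial Fₙ(x) := ₂F₁(-n, 1/2; 1; x) is monotone decreasing on [0,1], and hence (1/2)ₙ/n! ≤ Fₙ(x) ≤ 1 for all x ∈ [0,1]. -/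
open scoped Nat

/-- Pochhammer symbol `(a)_j` for real `a`. -/
noncomputable def poch (a : ℝ) (j : ℕ) : ℝ := (ascPochhammer ℝ j).eval a

/-- The terminating hypergeometric polynomial `Fₙ(x) = ₂F₁(-n, 1/2; 1; x)`. -/
noncomputable def F (n : ℕ) (x : ℝ) : ℝ :=
  ∑ j ∈ Finset.range (n + 1),
    poch (-(n : ℝ)) j * poch (1/2) j / ((j ! : ℝ) ^ 2) * x ^ j

/-!
Expanding `(1 - x sin² θ)ⁿ` binomially and using the Wallis integrals
`π⁻¹ ∫₀^π sin^{2j} θ dθ = (1/2)ⱼ / j!` gives `Fₙ(x) = π⁻¹ ∫₀^π (1 - x sin² θ)ⁿ dθ`.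
For `x ∈ [0, 1]` the integrand is nonnegative and decreasing in `x`, so `Fₙ` decreases from
`Fₙ(0) = 1` to `Fₙ(1) = π⁻¹ ∫₀^π cos^{2n} θ dθ = (1/2)ₙ / n!`.
-/

open Real Finset

lemma poch_neg_natCast (n j : ℕ) : poch (-(n : ℝ)) j = (-1) ^ j * (n.descFactorial j : ℝ) := by
  rw [poch, ascPochhammer_eval_neg_eq_descPochhammer, descPochhammer_eval_eq_descFactorial]

lemma poch_half_div_factorial (j : ℕ) :
    poch (1/2) j / (j ! : ℝ) = ∏ i ∈ range j, (2 * (i : ℝ) + 1) / (2 * i + 2) := by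
  induction j with
  | zero => simp [poch]
  | succ k ih =>
    simp only [poch] at ih ⊢
    rw [prod_range_succ, ← ih, ascPochhammer_succ_eval, Nat.factorial_succ]
    push_cast
    field_simp
    ring

lemma F_eq_sum_choose (n : ℕ) (x : ℝ) :
    F n x = ∑ j ∈ range (n + 1), (-x) ^ j * n.choose j * (poch (1/2) j / (j ! : ℝ)) := by
  refine sum_congr rfl fun j _ => ?_
  rw [poch_neg_natCast, Nat.descFactorial_eq_factorial_mul_choose]
  push_cast
  field_simp
  ring

/-- Euler's integral for `₂F₁` after the substitution `t = sin² θ`. -/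
lemma F_eq_integral (n : ℕ) (x : ℝ) :
    F n x = π⁻¹ * ∫ θ in 0..π, (1 - x * sin θ ^ 2) ^ n := by
  have binomial (θ : ℝ) : (1 - x * sin θ ^ 2) ^ n
      = ∑ j ∈ range (n + 1), (-x) ^ j * n.choose j * sin θ ^ (2 * j) := by
    rw [sub_eq_neg_add, add_pow]
    refine sum_congr rfl fun j _ => ?_
    ring
  simp_rw [binomial]
  rw [intervalIntegral.integral_finsetSum fun j _ => by
      apply Continuous.intervalIntegrable; fun_prop,
    mul_sum, F_eq_sum_choose]
  refine sum_congr rfl fun j _ => ?_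
  rw [intervalIntegral.integral_const_mul, integral_sin_pow_even, poch_half_div_factorial]
  field_simp

lemma integral_cos_pow_even (n : ℕ) :
    ∫ θ in 0..π, cos θ ^ (2 * n) = ∫ θ in 0..π, sin θ ^ (2 * n) := by
  induction n with
  | zero => simp
  | succ k ih => simp [Nat.mul_succ, integral_cos_pow, integral_sin_pow, ih]

lemma F_zero_right (n : ℕ) : F n 0 = 1 := by
  simp [F_eq_integral, pi_ne_zero]

lemma F_one_right (n : ℕ) : F n 1 = poch (1/2) n / (n ! : ℝ) := by
  simp_rw [F_eq_integral, one_mul, ← cos_sq', ← pow_mul, integral_cos_pow_even,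
    integral_sin_pow_even, poch_half_div_factorial]
  field_simp

lemma F_antitoneOn (n : ℕ) : AntitoneOn (F n) (Set.Icc 0 1) := by
  intro x _ y hy hxy
  rw [F_eq_integral, F_eq_integral]
  gcongr
  refine intervalIntegral.integral_mono_on pi_pos.le
    (Continuous.intervalIntegrable (by fun_prop) _ _)
    (Continuous.intervalIntegrable (by fun_prop) _ _) fun θ _ => ?_
  have : 0 ≤ 1 - y * sin θ ^ 2 := by nlinarith [hy.2, sq_nonneg (sin θ), sin_sq_le_one θ]
  gcongr

theorem F_antitone_and_bounds (n : ℕ) :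
    AntitoneOn (F n) (Set.Icc (0:ℝ) 1) ∧
    ∀ x ∈ Set.Icc (0:ℝ) 1, poch (1/2) n / (n ! : ℝ) ≤ F n x ∧ F n x ≤ 1 := by
  refine ⟨F_antitoneOn n, fun x hx => ⟨?_, ?_⟩⟩
  · rw [← F_one_right n]
    exact F_antitoneOn n hx (Set.right_mem_Icc.2 zero_le_one) hx.2
  · rw [← F_zero_right n]
    exact F_antitoneOn n (Set.left_mem_Icc.2 zero_le_one) hx hx.1
end

section
/- For every nonnegative integer n and every real x > 2, the polynomial Fₙ(x) := ₂F₁(-n, 1/2; 1; x) satisfies |Fₙ(x)| ≤ (x-1)ⁿ, and Fₙ(x) has the sign (-1)ⁿ. -/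
open scoped Nat

/-!
The Gauss contiguous relations give the three-term recurrence
`(n + 2) F_{n+2} = (n + 3/2) (2 - x) F_{n+1} + (n + 1) (x - 1) F_n`.
For `x > 2` the signed values `G_n = (-1)ⁿ F_n(x)` therefore satisfy a recurrence with positive
coefficients, so they stay positive, and since
`(n + 3/2) (x - 2) + (n + 1) = (n + 2) (x - 1) - x / 2 < (n + 2) (x - 1)`,
the bound `G_n ≤ (x - 1)ⁿ` propagates as well.
-/

lemma poch_zero (a : ℝ) : poch a 0 = 1 := by simp [poch]

lemma poch_succ (a : ℝ) (j : ℕ) : poch a (j + 1) = poch a j * (a + j) := by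
  simp [poch, ascPochhammer_succ_right]

lemma poch_sub_one_succ (a : ℝ) (j : ℕ) : poch (a - 1) (j + 1) = (a - 1) * poch a j := by
  simp [poch, ascPochhammer_succ_left]

lemma poch_neg_natCast_eq_zero {n j : ℕ} (h : n < j) : poch (-(n : ℝ)) j = 0 := by
  induction j, h using Nat.le_induction with
  | base => simp [poch_succ]
  | succ j _ ih => rw [poch_succ, ih, zero_mul]

noncomputable def coeffF (n j : ℕ) : ℝ := poch (-(n : ℝ)) j * poch (1/2) j / ((j ! : ℝ) ^ 2)

lemma coeffF_zero (n : ℕ) : coeffF n 0 = 1 := by simp [coeffF, poch_zero]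

lemma coeffF_eq_zero_of_lt {n j : ℕ} (h : n < j) : coeffF n j = 0 := by
  simp [coeffF, poch_neg_natCast_eq_zero h]

lemma coeffF_succ (n j : ℕ) :
    coeffF n (j + 1) = coeffF n j * ((j - n) * (j + 1/2) / (j + 1) ^ 2) := by
  simp only [coeffF, poch_succ, Nat.factorial_succ]
  push_cast
  field_simp
  ring

lemma coeffF_succ_succ (n j : ℕ) :
    coeffF (n + 1) (j + 1) = coeffF n j * (-(n + 1) * (j + 1/2) / (j + 1) ^ 2) := by
  have hpoch : poch (-((n + 1 : ℕ) : ℝ)) (j + 1) = -(n + 1) * poch (-(n : ℝ)) j := by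
    rw [show -((n + 1 : ℕ) : ℝ) = -(n : ℝ) - 1 by push_cast; ring, poch_sub_one_succ]
    ring
  simp only [coeffF, hpoch, poch_succ, Nat.factorial_succ]
  push_cast
  field_simp
  ring

lemma F_eq_sum_coeffF {n N : ℕ} (h : n < N) (x : ℝ) :
    F n x = ∑ j ∈ Finset.range N, coeffF n j * x ^ j := by
  refine Finset.sum_subset (Finset.range_subset_range.2 h) fun j _ hj => ?_
  change coeffF n j * x ^ j = 0
  rw [coeffF_eq_zero_of_lt (by simpa using hj), zero_mul]

lemma F_zero (x : ℝ) : F 0 x = 1 := by simp [F, poch_zero]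

lemma F_one (x : ℝ) : F 1 x = 1 - x / 2 := by
  rw [F_eq_sum_coeffF (Nat.lt_succ_self 1)]
  simp [Finset.sum_range_succ, coeffF_succ, coeffF_zero]
  ring

/-- The coefficient of `x ^ (j + 1)` in `F_recurrence`. -/
lemma coeffF_contiguous (n j : ℕ) :
    (n + 2) * coeffF (n + 2) (j + 1)
      = ((2 * n + 3) * coeffF (n + 1) (j + 1) - (n + 1) * coeffF n (j + 1))
        + ((n + 1) * coeffF n j - (n + 3/2) * coeffF (n + 1) j) := by
  rcases j with _ | k
  · simp only [coeffF_succ, coeffF_zero]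
    push_cast
    ring
  · have hk : ((k : ℝ) + 1) ≠ 0 := by positivity
    have hk' : ((k : ℝ) + 1 + 1) ≠ 0 := by positivity
    simp only [coeffF_succ_succ, coeffF_succ]
    push_cast
    field_simp
    ring

lemma sum_mul_pow_eq_of_shift {a b d : ℕ → ℝ} (h0 : a 0 = b 0)
    (hsucc : ∀ j, a (j + 1) = b (j + 1) + d j) (N : ℕ) (x : ℝ) :
    ∑ j ∈ Finset.range (N + 1), a j * x ^ j
      = ∑ j ∈ Finset.range (N + 1), b j * x ^ j
        + x * ∑ j ∈ Finset.range N, d j * x ^ j := by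
  induction N with
  | zero => simp [h0]
  | succ N ih =>
    rw [Finset.sum_range_succ (fun j => a j * x ^ j) (N + 1), ih,
      Finset.sum_range_succ (fun j => b j * x ^ j) (N + 1),
      Finset.sum_range_succ (fun j => d j * x ^ j), hsucc]
    ring

lemma F_recurrence (n : ℕ) (x : ℝ) :
    (n + 2) * F (n + 2) x
      = (n + 3/2) * (2 - x) * F (n + 1) x + (n + 1) * (x - 1) * F n x := by
  have hsum := sum_mul_pow_eq_of_shift (a := fun j => (n + 2) * coeffF (n + 2) j)
    (b := fun j => (2 * n + 3) * coeffF (n + 1) j - (n + 1) * coeffF n j)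
    (d := fun j => (n + 1) * coeffF n j - (n + 3/2) * coeffF (n + 1) j)
    (by simp only [coeffF_zero]; ring) (coeffF_contiguous n) (n + 3) x
  simp only [sub_mul, mul_assoc, Finset.sum_sub_distrib, ← Finset.mul_sum] at hsum
  rw [← F_eq_sum_coeffF (by omega), ← F_eq_sum_coeffF (by omega),
    ← F_eq_sum_coeffF (by omega), ← F_eq_sum_coeffF (by omega),
    ← F_eq_sum_coeffF (by omega)] at hsum
  linear_combination hsum

lemma pos_and_le_pow_of_recurrence {x : ℝ} (hx : 2 < x) {g : ℕ → ℝ} (h0 : g 0 = 1)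
    (h1 : g 1 = x / 2 - 1)
    (hrec : ∀ n : ℕ,
      (n + 2) * g (n + 2) = (n + 3/2) * (x - 2) * g (n + 1) + (n + 1) * (x - 1) * g n)
    (n : ℕ) : 0 < g n ∧ g n ≤ (x - 1) ^ n := by
  induction n using Nat.twoStepInduction with
  | zero => simp [h0]
  | one => constructor <;> linarith
  | more n ih₀ ih₁ =>
    have ha : (0 : ℝ) < (n + 3/2) * (x - 2) := mul_pos (by positivity) (by linarith)
    have hb : (0 : ℝ) < (n + 1) * (x - 1) := mul_pos (by positivity) (by linarith)
    have hpos : 0 < (n + 2) * g (n + 2) := by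
      rw [hrec]
      exact add_pos (mul_pos ha ih₁.1) (mul_pos hb ih₀.1)
    have hle : (n + 2) * g (n + 2) ≤ (n + 2) * (x - 1) ^ (n + 2) :=
      calc (n + 2) * g (n + 2)
          ≤ (n + 3/2) * (x - 2) * (x - 1) ^ (n + 1) + (n + 1) * (x - 1) * (x - 1) ^ n := by
            rw [hrec]
            gcongr
            exacts [ih₁.2, ih₀.2]
        _ = (n + 2) * (x - 1) ^ (n + 2) - x / 2 * (x - 1) ^ (n + 1) := by ring
        _ ≤ (n + 2) * (x - 1) ^ (n + 2) := by
            have : 0 < x / 2 * (x - 1) ^ (n + 1) :=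
              mul_pos (by linarith) (pow_pos (by linarith) _)
            linarith
    have hn : (0 : ℝ) < n + 2 := by positivity
    exact ⟨pos_of_mul_pos_right hpos hn.le, le_of_mul_le_mul_left hle hn⟩

theorem F_abs_bound_and_sign (n : ℕ) (x : ℝ) (hx : 2 < x) :
    |F n x| ≤ (x - 1) ^ n ∧ 0 < (-1 : ℝ) ^ n * F n x := by
  have hG := pos_and_le_pow_of_recurrence hx (g := fun m => (-1 : ℝ) ^ m * F m x)
    (by simp [F_zero]) (by simp [F_one])
    (fun m => by
      simp only [pow_succ]
      linear_combination (-1 : ℝ) ^ m * F_recurrence m x) n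
  have habs : |F n x| = (-1 : ℝ) ^ n * F n x := by
    rw [← abs_of_pos hG.1, abs_mul, abs_pow, abs_neg, abs_one, one_pow, one_mul]
  exact ⟨habs ▸ hG.2, hG.1⟩
end

section
/- For all λ ∈ (0,1) and k ∈ (0,1) satisfying 1 − λ²k² < 2(1−λ²), the sequence a_j = ((2j−1)!!/(2^{j+1}(j+1)!)) (1−k²)^{j+1} ∫₀^λ t^{2j+2}/(1−t²)^{j+1} dt (for j ≥ 0) is nonincreasing in j, i.e. a_{j+1} ≤ a_j for all j ≥ 0. -/
/-!
Writing `g t = t² / (1 - t²)`, the integrand of `a_j` is `g t ^ (j + 1)`, and `g` is increasing on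
`[0, λ]`, so the integrals satisfy `I_{j+1} ≤ g λ · I_j`. The coefficients satisfy
`c_{j+1} = (2j + 1)(1 - k²) / (2(j + 2)) · c_j`, hence `a_{j+1} ≤ (2j + 1)/(2j + 4) · (1 - k²) g λ · a_j`,
and the hypothesis on `λ, k` is exactly `(1 - k²) g λ < 1`.
-/

open scoped Nat
open Set

-- At `j = 0` truncated subtraction gives `(2 * j - 1)‼ = 0‼ = 1`, the convention `(-1)‼ = 1`.
lemma Nat.doubleFactorial_two_mul_succ_sub_one (j : ℕ) :
    (2 * (j + 1) - 1)‼ = (2 * j + 1) * (2 * j - 1)‼ := by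
  rw [show 2 * (j + 1) - 1 = 2 * j + 1 by omega, Nat.doubleFactorial_add_one]

lemma doubleFactorial_div_two_pow_mul_factorial_succ (j : ℕ) :
    ((2 * (j + 1) - 1)‼ : ℝ) / (2 ^ (j + 1 + 1) * ((j + 1 + 1)! : ℝ))
      = (2 * j + 1) / (2 * (j + 2)) * (((2 * j - 1)‼ : ℝ) / (2 ^ (j + 1) * ((j + 1)! : ℝ))) := by
  rw [Nat.doubleFactorial_two_mul_succ_sub_one, Nat.factorial_succ (j + 1)]
  push_cast
  field_simp
  ring

lemma intervalIntegral.integral_pow_succ_le_mul {g : ℝ → ℝ} {lam c : ℝ} (hlam : 0 ≤ lam)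
    (hg : ContinuousOn g (Icc 0 lam)) (hg0 : ∀ t ∈ Icc 0 lam, 0 ≤ g t)
    (hgc : ∀ t ∈ Icc 0 lam, g t ≤ c) (n : ℕ) :
    ∫ t in 0..lam, g t ^ (n + 1) ≤ c * ∫ t in 0..lam, g t ^ n := by
  have hint : ∀ m : ℕ, IntervalIntegrable (fun t => g t ^ m) MeasureTheory.volume 0 lam :=
    fun m => (hg.pow m).intervalIntegrable_of_Icc hlam
  rw [← intervalIntegral.integral_const_mul]
  refine intervalIntegral.integral_mono_on hlam (hint (n + 1)) ((hint n).const_mul c) fun t ht => ?_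
  rw [pow_succ']
  exact mul_le_mul_of_nonneg_right (hgc t ht) (pow_nonneg (hg0 t ht) n)

lemma sq_div_one_sub_sq_le {t lam : ℝ} (ht : t ∈ Icc 0 lam) (hlam : lam < 1) :
    t ^ 2 / (1 - t ^ 2) ≤ lam ^ 2 / (1 - lam ^ 2) := by
  obtain ⟨ht0, htl⟩ := ht
  have hsq : t ^ 2 ≤ lam ^ 2 := pow_le_pow_left₀ ht0 htl 2
  exact div_le_div₀ (sq_nonneg lam) hsq (by nlinarith) (by linarith)

lemma pow_two_mul_add_two_div_pow (t s : ℝ) (j : ℕ) :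
    t ^ (2 * j + 2) / s ^ (j + 1) = (t ^ 2 / s) ^ (j + 1) := by
  rw [div_pow, ← pow_mul, mul_add_one]

lemma integral_pow_div_one_sub_sq_succ_le {lam : ℝ} (hlam0 : 0 ≤ lam) (hlam1 : lam < 1)
    (j : ℕ) :
    ∫ t in (0:ℝ)..lam, t ^ (2 * (j + 1) + 2) / (1 - t ^ 2) ^ (j + 1 + 1)
      ≤ lam ^ 2 / (1 - lam ^ 2) * ∫ t in (0:ℝ)..lam, t ^ (2 * j + 2) / (1 - t ^ 2) ^ (j + 1) := by
  have hpos : ∀ t ∈ Icc 0 lam, 0 < 1 - t ^ 2 := fun t ht => by nlinarith [ht.1, ht.2]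
  simp only [pow_two_mul_add_two_div_pow]
  refine intervalIntegral.integral_pow_succ_le_mul hlam0 ?_
    (fun t ht => div_nonneg (sq_nonneg t) (hpos t ht).le)
    (fun t ht => sq_div_one_sub_sq_le ht hlam1) (j + 1)
  exact ContinuousOn.div (by fun_prop) (by fun_prop) fun t ht => (hpos t ht).ne'

lemma integral_pow_div_one_sub_sq_nonneg {lam : ℝ} (hlam0 : 0 ≤ lam) (hlam1 : lam < 1) (j : ℕ) :
    0 ≤ ∫ t in (0:ℝ)..lam, t ^ (2 * j + 2) / (1 - t ^ 2) ^ (j + 1) :=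
  intervalIntegral.integral_nonneg hlam0 fun t ht =>
    div_nonneg (pow_nonneg ht.1 _) (pow_nonneg (by nlinarith [ht.1, ht.2]) _)

theorem a_seq_nonincreasing (lam k : ℝ) (hlam : lam ∈ Set.Ioo (0:ℝ) 1)
    (hk : k ∈ Set.Ioo (0:ℝ) 1) (hcond : 1 - lam ^ 2 * k ^ 2 < 2 * (1 - lam ^ 2))
    (a : ℕ → ℝ)
    (ha : ∀ j : ℕ, a j = ((2 * j - 1)‼ : ℝ) / (2 ^ (j + 1) * ((j + 1)! : ℝ)) *
      (1 - k ^ 2) ^ (j + 1) * ∫ t in (0:ℝ)..lam, t ^ (2 * j + 2) / (1 - t ^ 2) ^ (j + 1)) :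
    ∀ j : ℕ, a (j + 1) ≤ a j := by
  intro j
  obtain ⟨hlam0, hlam1⟩ := hlam
  have hk2 : 0 < 1 - k ^ 2 := by nlinarith [hk.1, hk.2]
  have hlam2 : 0 < 1 - lam ^ 2 := by nlinarith
  have hratio : (2 * j + 1) / (2 * (j + 2)) * (1 - k ^ 2) * (lam ^ 2 / (1 - lam ^ 2)) ≤ 1 := by
    rw [div_mul_eq_mul_div, div_mul_div_comm, div_le_one (by positivity)]
    nlinarith [mul_le_mul_of_nonneg_left (show lam ^ 2 * (1 - k ^ 2) ≤ 1 - lam ^ 2 by linarith)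
      (show (0:ℝ) ≤ 2 * j + 1 by positivity)]
  have hI := integral_pow_div_one_sub_sq_nonneg hlam0.le hlam1 j
  have hC : (0:ℝ) ≤ ((2 * j - 1)‼ : ℝ) / (2 ^ (j + 1) * ((j + 1)! : ℝ)) * (1 - k ^ 2) ^ (j + 1) := by
    positivity
  rw [ha, ha, doubleFactorial_div_two_pow_mul_factorial_succ, pow_succ]
  calc _ ≤ (2 * j + 1) / (2 * (j + 2)) * ((2 * j - 1)‼ / (2 ^ (j + 1) * (j + 1)!)) *
          ((1 - k ^ 2) ^ (j + 1) * (1 - k ^ 2)) * (lam ^ 2 / (1 - lam ^ 2) *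
            ∫ t in (0:ℝ)..lam, t ^ (2 * j + 2) / (1 - t ^ 2) ^ (j + 1)) :=
        mul_le_mul_of_nonneg_left (integral_pow_div_one_sub_sq_succ_le hlam0.le hlam1 j)
          (by positivity)
    _ = (2 * j + 1) / (2 * (j + 2)) * (1 - k ^ 2) * (lam ^ 2 / (1 - lam ^ 2)) *
          (((2 * j - 1)‼ / (2 ^ (j + 1) * (j + 1)!)) * (1 - k ^ 2) ^ (j + 1) *
            ∫ t in (0:ℝ)..lam, t ^ (2 * j + 2) / (1 - t ^ 2) ^ (j + 1)) := by ring
    _ ≤ _ := mul_le_of_le_one_left (mul_nonneg hC hI) hratio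
end

section
/- For all λ ∈ (0,1), k ∈ (0,1) with (1−k²)λ² < 1−λ² (equivalently 1−λ²k² < 2(1−λ²)), and every integer N ≥ 1, the remainder R of the expansion of E(λ,k) = ∑_{j=0}^∞ (−1)^j ((−1/2)_j/j!) (1−k²)^j ∫₀^λ t^{2j}/(1−t²)^j dt truncated after j = N satisfies |R| ≤ (λ(1−λ²)(2N−1)!!)/(N·2^{N+2}(N+1)!) · ((1−k²)λ²/(1−λ²))^{N+1}. -/
open scoped Nat

noncomputable def pr (c : ℝ) (j : ℕ) : ℝ := ∏ i ∈ Finset.range j, (c - i)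
noncomputable def bcoef (c : ℝ) (j : ℕ) : ℝ := pr c j / j !

lemma pr_succ' (c : ℝ) (j : ℕ) : pr c (j + 1) = c * pr (c - 1) j := by
  unfold pr
  rw [Finset.prod_range_succ']
  simp only [Nat.cast_add, Nat.cast_one, Nat.cast_zero, sub_zero]
  rw [mul_comm]
  congr 1
  exact Finset.prod_congr rfl (fun i _ => by ring)

lemma bcoef_succ (c : ℝ) (j : ℕ) : ((j : ℝ) + 1) * bcoef c (j + 1) = c * bcoef (c - 1) j := by
  unfold bcoef
  rw [pr_succ', Nat.factorial_succ]
  have h1 : (j ! : ℝ) ≠ 0 := Nat.cast_ne_zero.2 (Nat.factorial_ne_zero j)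
  have h2 : ((j : ℝ) + 1) ≠ 0 := by positivity
  push_cast
  field_simp

/-- helper: if g 0 = 0 and |g'| ≤ C t^m on [0,x] then |g x| ≤ C x^(m+1)/(m+1) -/
lemma abs_le_of_deriv_bound {x : ℝ} (hx : 0 ≤ x) (g g' : ℝ → ℝ) {C : ℝ} (hC : 0 ≤ C) (m : ℕ)
    (hg0 : g 0 = 0)
    (hderiv : ∀ t ∈ Set.uIcc (0:ℝ) x, HasDerivAt g (g' t) t)
    (hcont : ContinuousOn g' (Set.uIcc 0 x))
    (hbound : ∀ t ∈ Set.uIcc (0:ℝ) x, |g' t| ≤ C * t ^ m) :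
    |g x| ≤ C * x ^ (m + 1) / (m + 1) := by
  have hInt : IntervalIntegrable g' MeasureTheory.volume 0 x :=
    hcont.intervalIntegrable
  have heq : ∫ t in (0:ℝ)..x, g' t = g x - g 0 :=
    intervalIntegral.integral_eq_sub_of_hasDerivAt hderiv hInt
  have hIntB : IntervalIntegrable (fun t => C * t ^ m) MeasureTheory.volume 0 x :=
    Continuous.intervalIntegrable (by continuity) 0 x
  have hae : ∀ᵐ t ∂(MeasureTheory.volume.restrict (Set.uIoc (0:ℝ) x)),
      ‖g' t‖ ≤ C * t ^ m := by
    refine (MeasureTheory.ae_restrict_iff' measurableSet_uIoc).2 ?_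
    filter_upwards with t ht
    exact hbound t (Set.uIoc_subset_uIcc ht)
  have hle := intervalIntegral.norm_integral_le_abs_of_norm_le hae hIntB
  rw [heq, hg0, sub_zero] at hle
  have hval : ∫ t in (0:ℝ)..x, C * t ^ m = C * (x ^ (m+1)) / (m + 1) := by
    rw [intervalIntegral.integral_const_mul, integral_pow]
    simp
    ring
  rw [hval] at hle
  calc |g x| ≤ |C * x ^ (m+1) / (m+1)| := hle
    _ = C * x ^ (m+1) / (m+1) := abs_of_nonneg (by positivity)

lemma bcoef_zero (c : ℝ) : bcoef c 0 = 1 := by simp [bcoef, pr]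

lemma bcoef_one (c : ℝ) : bcoef c 1 = c := by simp [bcoef, pr]

lemma hasDerivAt_onePow (c : ℝ) {t : ℝ} (h : 0 < 1 + t) :
    HasDerivAt (fun s : ℝ => (1 + s) ^ c) (c * (1 + t) ^ (c - 1)) t := by
  have h1 : HasDerivAt (fun s : ℝ => 1 + s) 1 t := by
    simpa using (hasDerivAt_id t).const_add (1 : ℝ)
  have h2 := (Real.hasDerivAt_rpow_const (p := c) (Or.inl h.ne')).comp t h1
  simpa [Function.comp_def] using h2

lemma tail_bound : ∀ (N : ℕ) (c : ℝ), c ≤ 1 → ∀ x : ℝ, 0 ≤ x →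
    |(1 + x) ^ c - ∑ j ∈ Finset.range (N + 1), bcoef c j * x ^ j| ≤
      |bcoef c (N + 1)| * x ^ (N + 1) := by
  intro N
  induction N with
  | zero =>
    intro c hc x hx
    have hpos : ∀ t ∈ Set.uIcc (0:ℝ) x, 0 < 1 + t := by
      intro t ht
      rw [Set.uIcc_of_le hx] at ht
      linarith [ht.1]
    have key := abs_le_of_deriv_bound hx (fun t => (1 + t) ^ c - 1)
      (fun t => c * (1 + t) ^ (c - 1)) (abs_nonneg c) 0
      (by simp)
      (fun t ht => ((hasDerivAt_onePow c (hpos t ht)).sub_const 1))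
      (by
        apply ContinuousOn.mul continuousOn_const
        apply ContinuousOn.rpow_const (continuousOn_const.add continuousOn_id)
        intro t ht
        exact Or.inl (hpos t ht).ne')
      (by
        intro t ht
        have h1t : (1:ℝ) ≤ 1 + t := by
          rw [Set.uIcc_of_le hx] at ht; linarith [ht.1]
        have h2 : (1 + t) ^ (c - 1) ≤ 1 :=
          Real.rpow_le_one_of_one_le_of_nonpos h1t (by linarith)
        have h3 : 0 < (1 + t) ^ (c - 1) := Real.rpow_pos_of_pos (hpos t ht) _
        rw [abs_mul, abs_of_pos h3]
        calc |c| * (1+t)^(c-1) ≤ |c| * 1 := by nlinarith [abs_nonneg c]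
          _ = |c| * t ^ 0 := by simp)
    simp only [pow_one, Nat.cast_zero, zero_add, div_one, pow_zero] at key
    calc |(1 + x) ^ c - ∑ j ∈ Finset.range 1, bcoef c j * x ^ j|
        = |(1 + x) ^ c - 1| := by simp [bcoef_zero]
      _ ≤ |c| * x ^ 1 := by simpa using key
      _ = |bcoef c 1| * x ^ 1 := by rw [bcoef_one]
  | succ M ih =>
    intro c hc x hx
    have hc1 : c - 1 ≤ 1 := by linarith
    have hpos : ∀ t ∈ Set.uIcc (0:ℝ) x, 0 < 1 + t := by
      intro t ht
      rw [Set.uIcc_of_le hx] at ht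
      linarith [ht.1]
    set g' : ℝ → ℝ := fun t =>
      c * ((1 + t) ^ (c - 1) - ∑ j ∈ Finset.range (M + 1), bcoef (c-1) j * t ^ j) with hg'
    have hC : (0:ℝ) ≤ |c| * |bcoef (c-1) (M+1)| := by positivity
    have hderiv : ∀ t ∈ Set.uIcc (0:ℝ) x,
        HasDerivAt (fun s => (1 + s) ^ c - ∑ j ∈ Finset.range (M + 2), bcoef c j * s ^ j)
          (g' t) t := by
      intro t ht
      have hsum : HasDerivAt (fun s : ℝ => ∑ j ∈ Finset.range (M + 2), bcoef c j * s ^ j)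
          (∑ j ∈ Finset.range (M + 2), bcoef c j * (j * t ^ (j - 1))) t := by
        apply HasDerivAt.fun_sum
        intro j _
        exact (hasDerivAt_pow j t).const_mul (bcoef c j)
      have hval : ∑ j ∈ Finset.range (M + 2), bcoef c j * (j * t ^ (j - 1))
          = ∑ j ∈ Finset.range (M + 1), c * bcoef (c-1) j * t ^ j := by
        rw [Finset.sum_range_succ']
        simp only [Nat.cast_zero, pow_zero, mul_zero, zero_mul, add_zero]
        apply Finset.sum_congr rfl
        intro j _
        rw [show j + 1 - 1 = j from rfl]
        push_cast
        linear_combination (t ^ j) * bcoef_succ c j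
      rw [hval] at hsum
      have := (hasDerivAt_onePow c (hpos t ht)).sub hsum
      refine this.congr_deriv ?_
      simp only [hg', mul_sub, Finset.mul_sum, mul_assoc]
    have hcont : ContinuousOn g' (Set.uIcc 0 x) := by
      apply ContinuousOn.mul continuousOn_const
      apply ContinuousOn.sub
      · apply ContinuousOn.rpow_const (continuousOn_const.add continuousOn_id)
        intro t ht
        exact Or.inl (hpos t ht).ne'
      · exact continuousOn_finset_sum _ (fun j _ =>
          continuousOn_const.mul (continuousOn_pow j))
    have hbound : ∀ t ∈ Set.uIcc (0:ℝ) x, |g' t| ≤ (|c| * |bcoef (c-1) (M+1)|) * t ^ (M+1) := by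
      intro t ht
      have ht0 : 0 ≤ t := by rw [Set.uIcc_of_le hx] at ht; exact ht.1
      have := ih (c - 1) hc1 t ht0
      rw [hg', abs_mul]
      calc |c| * |(1 + t) ^ (c-1) - ∑ j ∈ Finset.range (M + 1), bcoef (c-1) j * t ^ j|
          ≤ |c| * (|bcoef (c-1) (M+1)| * t ^ (M+1)) := by
            exact mul_le_mul_of_nonneg_left this (abs_nonneg c)
        _ = (|c| * |bcoef (c-1) (M+1)|) * t ^ (M+1) := by ring
    have hg0 : ((1:ℝ) + 0) ^ c - ∑ j ∈ Finset.range (M + 2), bcoef c j * (0:ℝ) ^ j = 0 := by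
      rw [Finset.sum_eq_single 0]
      · simp [bcoef_zero]
      · intro j _ hj
        simp [zero_pow hj]
      · simp
    have key := abs_le_of_deriv_bound hx
      (fun s => (1 + s) ^ c - ∑ j ∈ Finset.range (M + 2), bcoef c j * s ^ j)
      g' hC (M+1) hg0 hderiv hcont hbound
    have hfact : (|c| * |bcoef (c-1) (M+1)|) / ((M:ℝ) + 1 + 1) = |bcoef c (M + 2)| := by
      have h := bcoef_succ c (M + 1)
      have h2 : |((M:ℝ) + 1 + 1)| * |bcoef c (M + 2)| = |c| * |bcoef (c-1) (M+1)| := by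
        rw [← abs_mul, ← abs_mul]
        push_cast at h ⊢
        rw [h]
      have h3 : |((M:ℝ) + 1 + 1)| = (M:ℝ) + 1 + 1 := abs_of_pos (by positivity)
      rw [h3] at h2
      field_simp [← h2]
      linarith [h2]
    refine le_trans (by push_cast at key; exact key) (le_of_eq ?_)
    rw [← hfact]
    push_cast
    ring

lemma coef_eq (j : ℕ) : (-1 : ℝ) ^ j * (poch (-(1/2)) j / (j ! : ℝ)) = bcoef (1/2 : ℝ) j := by
  have key : (-1 : ℝ) ^ j * poch (-(1/2)) j = pr (1/2 : ℝ) j := by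
    induction j with
    | zero => simp [poch, pr]
    | succ n ih =>
      unfold poch at ih ⊢
      rw [ascPochhammer_succ_eval]
      unfold pr at ih ⊢
      rw [Finset.prod_range_succ, ← ih]
      push_cast
      ring
  unfold bcoef
  rw [← key]
  ring

lemma doubleFact_step (N : ℕ) : (((2 * (N + 1) - 1)‼ : ℕ) : ℝ) = (2 * N + 1) * ((2 * N - 1)‼ : ℕ) := by
  cases N with
  | zero => norm_num [Nat.doubleFactorial]
  | succ M =>
    have h1 : 2 * (M + 1 + 1) - 1 = (2 * M + 1) + 2 := by omega
    have h2 : 2 * (M + 1) - 1 = 2 * M + 1 := by omega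
    rw [h1, h2, Nat.doubleFactorial_add_two]
    push_cast
    ring

lemma pr_half (N : ℕ) : pr (1/2 : ℝ) (N + 1) = (-1 : ℝ) ^ N * ((2 * N - 1)‼ : ℕ) / 2 ^ (N + 1) := by
  induction N with
  | zero => norm_num [pr, Nat.doubleFactorial]
  | succ M ih =>
    unfold pr at ih ⊢
    rw [Finset.prod_range_succ, ih, doubleFact_step]
    push_cast
    ring

lemma abs_bcoef_half (N : ℕ) :
    |bcoef (1/2 : ℝ) (N + 1)| = ((2 * N - 1)‼ : ℕ) / (2 ^ (N + 1) * ((N + 1)! : ℕ)) := by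
  unfold bcoef
  rw [pr_half, abs_div, abs_div, abs_mul, abs_pow, abs_neg, abs_one, one_pow, one_mul]
  rw [abs_of_nonneg (by positivity : (0:ℝ) ≤ ((2 * N - 1)‼ : ℕ)),
    abs_of_nonneg (by positivity : (0:ℝ) ≤ (2:ℝ) ^ (N + 1)),
    abs_of_nonneg (by positivity : (0:ℝ) ≤ (((N + 1)! : ℕ) : ℝ))]
  field_simp

lemma int_bound (lam : ℝ) (hl0 : 0 < lam) (hl1 : lam < 1) (M : ℕ) :
    ∫ t in (0:ℝ)..lam, t ^ (2*M+4) / (1 - t^2) ^ (M+2) ≤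
      lam ^ (2*M+5) / ((2*(M+1)) * (1 - lam^2) ^ (M+1)) := by
  have hll : 0 ≤ lam := hl0.le
  have hpos : ∀ t ∈ Set.uIcc (0:ℝ) lam, 0 < 1 - t^2 := by
    intro t ht
    rw [Set.uIcc_of_le hll] at ht
    nlinarith [ht.1, ht.2]
  set G : ℝ → ℝ := fun t => lam^3 / (2*M+2) * (t^(2*M+2) / (1 - t^2)^(M+1)) with hG
  set g' : ℝ → ℝ := fun t => lam^3 * t^(2*M+1) / (1 - t^2)^(M+2) with hg'
  have hderiv : ∀ t ∈ Set.uIcc (0:ℝ) lam, HasDerivAt G (g' t) t := by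
    intro t ht
    have h1 : 0 < 1 - t^2 := hpos t ht
    have hd1 : HasDerivAt (fun s : ℝ => 1 - s^2) (-(2*t)) t := by
      simpa using ((hasDerivAt_pow 2 t).const_sub 1)
    have hd2 : HasDerivAt (fun s : ℝ => (1 - s^2)^(M+1))
        (((M+1 : ℕ) : ℝ) * (1 - t^2)^(M+1-1) * (-(2*t))) t := hd1.pow (M+1)
    have hd3 := ((hasDerivAt_pow (2*M+2) t).div hd2 (pow_ne_zero _ h1.ne')).const_mul
      (lam^3 / (2*M+2))
    refine hd3.congr_deriv ?_
    rw [hg']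
    have hMsub : M + 1 - 1 = M := rfl
    rw [hMsub]
    rw [show 2*M+2-1 = 2*M+1 by omega]
    push_cast
    have h2 : ((1:ℝ) - t^2)^(M+1) ≠ 0 := pow_ne_zero _ h1.ne'
    have h3 : ((1:ℝ) - t^2)^(M+2) ≠ 0 := pow_ne_zero _ h1.ne'
    have h4 : (2*(M:ℝ)+2) ≠ 0 := by positivity
    field_simp
    ring
  have hint2 : IntervalIntegrable g' MeasureTheory.volume 0 lam := by
    apply ContinuousOn.intervalIntegrable
    apply ContinuousOn.div (by fun_prop) (by fun_prop)
    intro t ht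
    exact pow_ne_zero _ (hpos t ht).ne'
  have hint1 : IntervalIntegrable (fun t => t ^ (2*M+4) / (1 - t^2) ^ (M+2))
      MeasureTheory.volume 0 lam := by
    apply ContinuousOn.intervalIntegrable
    apply ContinuousOn.div (by fun_prop) (by fun_prop)
    intro t ht
    exact pow_ne_zero _ (hpos t ht).ne'
  have hmono : ∫ t in (0:ℝ)..lam, t ^ (2*M+4) / (1 - t^2) ^ (M+2) ≤ ∫ t in (0:ℝ)..lam, g' t := by
    apply intervalIntegral.integral_mono_on hll hint1 hint2
    intro t ht
    have h1 : 0 < 1 - t^2 := hpos t (by rwa [Set.uIcc_of_le hll])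
    have hnum : t ^ (2*M+4) ≤ lam^3 * t^(2*M+1) := by
      have he : t ^ (2*M+4) = t^3 * t^(2*M+1) := by ring
      rw [he]
      exact mul_le_mul_of_nonneg_right (pow_le_pow_left₀ ht.1 ht.2 3)
        (pow_nonneg ht.1 _)
    show _ ≤ lam^3 * t^(2*M+1) / (1 - t^2)^(M+2)
    exact (div_le_div_iff_of_pos_right (pow_pos h1 _)).2 hnum
  have heval : ∫ t in (0:ℝ)..lam, g' t = G lam - G 0 :=
    intervalIntegral.integral_eq_sub_of_hasDerivAt hderiv hint2
  have hfin : G lam - G 0 = lam ^ (2*M+5) / ((2*(M+1)) * (1 - lam^2) ^ (M+1)) := by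
    rw [hG]
    simp only
    have h1 : 0 < 1 - lam^2 := by nlinarith
    have h2 : ((1:ℝ) - lam^2)^(M+1) ≠ 0 := pow_ne_zero _ h1.ne'
    have h4 : (2*(M:ℝ)+2) ≠ 0 := by positivity
    rw [zero_pow (by omega), zero_div, mul_zero, sub_zero]
    field_simp
    ring
  exact hmono.trans_eq (heval.trans hfin)

/-- Legendre's incomplete elliptic integral of the second kind. -/
noncomputable def E (lam k : ℝ) : ℝ :=
  ∫ t in (0:ℝ)..lam, Real.sqrt ((1 - k ^ 2 * t ^ 2) / (1 - t ^ 2))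

set_option maxHeartbeats 1000000 in
theorem remainder_bound_first (lam k : ℝ) (hlam : lam ∈ Set.Ioo (0:ℝ) 1)
    (hk : k ∈ Set.Ioo (0:ℝ) 1) (hcond : (1 - k ^ 2) * lam ^ 2 < 1 - lam ^ 2)
    (N : ℕ) (hN : 1 ≤ N) :
    |E lam k - ∑ j ∈ Finset.range (N + 1), (-1 : ℝ) ^ j * (poch (-(1/2)) j / (j ! : ℝ)) *
        (1 - k ^ 2) ^ j * ∫ t in (0:ℝ)..lam, t ^ (2 * j) / (1 - t ^ 2) ^ j| ≤
      lam * (1 - lam ^ 2) * ((2 * N - 1)‼ : ℝ) / (N * 2 ^ (N + 2) * ((N + 1)! : ℝ)) *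
        ((1 - k ^ 2) * lam ^ 2 / (1 - lam ^ 2)) ^ (N + 1) := by
  obtain ⟨hl0, hl1⟩ := hlam
  obtain ⟨hk0, hk1⟩ := hk
  obtain ⟨M, rfl⟩ : ∃ M, N = M + 1 := ⟨N - 1, by omega⟩
  have hll : (0:ℝ) ≤ lam := hl0.le
  have hIcc : Set.uIcc (0:ℝ) lam = Set.Icc 0 lam := Set.uIcc_of_le hll
  have hk2 : (0:ℝ) < 1 - k ^ 2 := by nlinarith
  have hlam2 : (0:ℝ) < 1 - lam ^ 2 := by nlinarith
  have hden : ∀ t ∈ Set.uIcc (0:ℝ) lam, (0:ℝ) < 1 - t ^ 2 := by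
    intro t ht; rw [hIcc] at ht; nlinarith [ht.1, ht.2]
  set f : ℝ → ℝ := fun t => Real.sqrt ((1 - k ^ 2 * t ^ 2) / (1 - t ^ 2)) with hfdef
  set P : ℝ → ℝ := fun t =>
    ∑ j ∈ Finset.range (M + 2), bcoef (1/2) j * (1 - k ^ 2) ^ j * (t ^ (2*j) / (1 - t ^ 2) ^ j)
    with hPdef
  set A : ℝ := |bcoef (1/2) (M + 2)| * (1 - k ^ 2) ^ (M + 2) with hA
  have hA0 : 0 ≤ A := by positivity
  -- integrability of the power terms
  have hcontj : ∀ j : ℕ, ContinuousOn (fun t : ℝ => t ^ (2*j) / (1 - t ^ 2) ^ j)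
      (Set.uIcc 0 lam) := by
    intro j
    apply ContinuousOn.div (by fun_prop) (by fun_prop)
    intro t ht
    exact pow_ne_zero _ (hden t ht).ne'
  have hintj : ∀ j : ℕ, IntervalIntegrable (fun t : ℝ => t ^ (2*j) / (1 - t ^ 2) ^ j)
      MeasureTheory.volume 0 lam := fun j => (hcontj j).intervalIntegrable
  have hintP : IntervalIntegrable P MeasureTheory.volume 0 lam := by
    have hPsum : P = ∑ j ∈ Finset.range (M + 2),
        (fun t : ℝ => bcoef (1/2) j * (1 - k ^ 2) ^ j * (t ^ (2*j) / (1 - t ^ 2) ^ j)) := by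
      funext t
      rw [hPdef, Finset.sum_apply]
    rw [hPsum]
    exact IntervalIntegrable.sum _ (fun j _ => (hintj j).const_mul _)
  have hintf : IntervalIntegrable f MeasureTheory.volume 0 lam := by
    apply ContinuousOn.intervalIntegrable
    apply Real.continuous_sqrt.comp_continuousOn
    apply ContinuousOn.div (by fun_prop) (by fun_prop)
    intro t ht
    exact (hden t ht).ne'
  -- the partial sum equals the integral of P
  have hS : (∑ j ∈ Finset.range (M + 1 + 1), (-1 : ℝ) ^ j * (poch (-(1/2)) j / (j ! : ℝ)) *
      (1 - k ^ 2) ^ j * ∫ t in (0:ℝ)..lam, t ^ (2 * j) / (1 - t ^ 2) ^ j)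
      = ∫ t in (0:ℝ)..lam, P t := by
    rw [hPdef]
    rw [intervalIntegral.integral_finset_sum (fun j _ => ((hintj j).const_mul _))]
    apply Finset.sum_congr rfl
    intro j _
    rw [intervalIntegral.integral_const_mul, ← coef_eq j]
  -- pointwise bound
  have hpt : ∀ t ∈ Set.uIcc (0:ℝ) lam,
      |f t - P t| ≤ A * (t ^ (2*M+4) / (1 - t ^ 2) ^ (M+2)) := by
    intro t ht
    have h1t : 0 < 1 - t ^ 2 := hden t ht
    have ht0 : 0 ≤ t := by rw [hIcc] at ht; exact ht.1
    set y : ℝ := (1 - k ^ 2) * t ^ 2 / (1 - t ^ 2) with hy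
    have hy0 : 0 ≤ y := by positivity
    have hfx : f t = (1 + y) ^ (1/2 : ℝ) := by
      rw [hfdef]
      have hbase : (1 - k ^ 2 * t ^ 2) / (1 - t ^ 2) = 1 + y := by
        rw [hy]; field_simp; ring
      simp only []
      rw [hbase, Real.sqrt_eq_rpow]
    have hPx : P t = ∑ j ∈ Finset.range (M + 2), bcoef (1/2) j * y ^ j := by
      rw [hPdef]
      apply Finset.sum_congr rfl
      intro j _
      rw [hy, div_pow, mul_pow, ← pow_mul]
      ring
    have hyp : y ^ (M + 2) = (1 - k ^ 2) ^ (M+2) * (t ^ (2*M+4) / (1 - t ^ 2) ^ (M+2)) := by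
      rw [hy, div_pow, mul_pow, ← pow_mul]
      rw [show 2 * (M + 2) = 2*M+4 from by ring]
      ring
    rw [hfx, hPx]
    calc |(1 + y) ^ (1/2 : ℝ) - ∑ j ∈ Finset.range (M + 2), bcoef (1/2) j * y ^ j|
        ≤ |bcoef (1/2) (M + 2)| * y ^ (M + 2) :=
          tail_bound (M + 1) (1/2) (by norm_num) y hy0
      _ = A * (t ^ (2*M+4) / (1 - t ^ 2) ^ (M+2)) := by rw [hyp, hA]; ring
  -- integrability of the bound
  have hcontB : ContinuousOn (fun t : ℝ => t ^ (2*M+4) / (1 - t ^ 2) ^ (M+2))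
      (Set.uIcc 0 lam) := by
    apply ContinuousOn.div (by fun_prop) (by fun_prop)
    intro t ht
    exact pow_ne_zero _ (hden t ht).ne'
  have hintB : IntervalIntegrable (fun t : ℝ => A * (t ^ (2*M+4) / (1 - t ^ 2) ^ (M+2)))
      MeasureTheory.volume 0 lam := (hcontB.intervalIntegrable).const_mul _
  -- assemble
  have hE : E lam k = ∫ t in (0:ℝ)..lam, f t := rfl
  rw [hS, hE, ← intervalIntegral.integral_sub hintf hintP]
  have hae : ∀ᵐ t ∂(MeasureTheory.volume.restrict (Set.uIoc (0:ℝ) lam)),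
      ‖f t - P t‖ ≤ A * (t ^ (2*M+4) / (1 - t ^ 2) ^ (M+2)) := by
    refine (MeasureTheory.ae_restrict_iff' measurableSet_uIoc).2 ?_
    filter_upwards with t ht
    exact hpt t (Set.uIoc_subset_uIcc ht)
  have hle := intervalIntegral.norm_integral_le_abs_of_norm_le hae hintB
  have hBval : ∫ t in (0:ℝ)..lam, A * (t ^ (2*M+4) / (1 - t ^ 2) ^ (M+2))
      = A * ∫ t in (0:ℝ)..lam, t ^ (2*M+4) / (1 - t ^ 2) ^ (M+2) :=
    intervalIntegral.integral_const_mul _ _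
  have hI0 : 0 ≤ ∫ t in (0:ℝ)..lam, t ^ (2*M+4) / (1 - t ^ 2) ^ (M+2) := by
    apply intervalIntegral.integral_nonneg hll
    intro t ht
    have h1t : 0 < 1 - t ^ 2 := hden t (by rwa [hIcc])
    exact div_nonneg (pow_nonneg ht.1 _) (pow_nonneg h1t.le _)
  rw [hBval] at hle
  rw [abs_of_nonneg (mul_nonneg hA0 hI0)] at hle
  refine le_trans hle ?_
  have hIB := int_bound lam hl0 hl1 M
  calc A * ∫ t in (0:ℝ)..lam, t ^ (2*M+4) / (1 - t ^ 2) ^ (M+2)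
      ≤ A * (lam ^ (2*M+5) / ((2*(M+1)) * (1 - lam ^ 2) ^ (M+1))) :=
        mul_le_mul_of_nonneg_left hIB hA0
    _ = lam * (1 - lam ^ 2) * (((2 * (M+1) - 1)‼ : ℕ) : ℝ) /
          (((M+1 : ℕ) : ℝ) * 2 ^ ((M+1) + 2) * (((M+1) + 1)! : ℝ)) *
        ((1 - k ^ 2) * lam ^ 2 / (1 - lam ^ 2)) ^ ((M+1) + 1) := by
      rw [hA, abs_bcoef_half (M+1)]
      have hfac : (((M + 2)! : ℕ) : ℝ) ≠ 0 := Nat.cast_ne_zero.2 (Nat.factorial_ne_zero _)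
      have hM1 : ((M:ℝ) + 1) ≠ 0 := by positivity
      push_cast
      rw [div_pow, mul_pow]
      field_simp
      ring
end

section
/- For every real x with 0 < x < 1, s₁(x) := ∑_{j=2}^∞ ((−1/2)_j (1/2 − j) / (j!(1−j))) (−x)^j equals (1/4)[−2 + 2√(1+x) + x(2·ln 2 − 1 − 2·ln(1 + √(1+x)))]. -/
/-!
Since `(-1/2)_j (-1)^j / j! = binom(1/2, j)` and `(j - 1/2)/(j - 1) = 1 + 1/(2(j - 1))`, the series
`s₁(x)` is the tail `∑_{j ≥ 2} binom(1/2, j) x^j = √(1+x) - 1 - x/2` of the binomial series plus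
`(x/2) H(x)`, where `H(x) = ∑_n binom(1/2, n+2) x^(n+1)/(n+1)`. Differentiating termwise,
`H'(x) = (√(1+x) - 1 - x/2)/x² = -1/(2(1 + √(1+x))²)`, which is also the derivative of
`1/2 - 1/(1 + √(1+x)) + log 2 - log (1 + √(1+x))`; both functions vanish at `0`.
-/

open scoped Nat

open Set Real

section AntiderivativeSeries

variable {a : ℕ → ℝ} {r x : ℝ}

theorem summable_mul_pow_succ_div (ha : Summable fun n => a n * r ^ n) (hx : |x| ≤ r) :
    Summable fun n : ℕ => a n * x ^ (n + 1) / (n + 1) := by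
  have hr : 0 ≤ r := (abs_nonneg x).trans hx
  refine .of_norm_bounded (ha.abs.mul_left r) fun n => ?_
  rw [Real.norm_eq_abs, abs_div, abs_mul, abs_mul, abs_pow, abs_pow, abs_of_nonneg hr,
    abs_of_pos (by positivity : (0 : ℝ) < n + 1), div_le_iff₀ (by positivity)]
  calc |a n| * |x| ^ (n + 1) ≤ |a n| * r ^ (n + 1) := by gcongr
    _ = r * (|a n| * r ^ n) * 1 := by ring
    _ ≤ r * (|a n| * r ^ n) * (n + 1) := by gcongr; linarith [n.cast_nonneg (α := ℝ)]

theorem hasDerivAt_tsum_mul_pow_succ_div (ha : Summable fun n => a n * r ^ n) (hx : |x| < r) :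
    HasDerivAt (fun y => ∑' n : ℕ, a n * y ^ (n + 1) / (n + 1)) (∑' n, a n * x ^ n) x := by
  have hr : 0 < r := (abs_nonneg x).trans_lt hx
  have hderiv (n : ℕ) (y : ℝ) :
      HasDerivAt (fun y => a n * y ^ (n + 1) / (n + 1)) (a n * y ^ n) y := by
    refine (((hasDerivAt_pow (n + 1) y).const_mul (a n)).div_const ((n : ℝ) + 1)).congr_deriv ?_
    push_cast
    field_simp
  have hbound (n : ℕ) (y : ℝ) (hy : y ∈ Ioo (-r) r) : ‖a n * y ^ n‖ ≤ |a n * r ^ n| := by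
    rw [Real.norm_eq_abs, abs_mul, abs_mul, abs_pow, abs_pow, abs_of_pos hr]
    gcongr
    exact abs_le.mpr ⟨hy.1.le, hy.2.le⟩
  exact hasDerivAt_tsum_of_isPreconnected ha.abs isOpen_Ioo isPreconnected_Ioo
    (fun n y _ => hderiv n y) hbound (y₀ := 0) ⟨neg_lt_zero.mpr hr, hr⟩
    (summable_mul_pow_succ_div ha (by simpa using hr.le)) (abs_lt.mp hx)

end AntiderivativeSeries

theorem poch_neg (a : ℝ) (n : ℕ) : poch (-a) n = (-1) ^ n * (n ! * Ring.choose a n) := by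
  rw [poch, ascPochhammer_eval_neg_eq_descPochhammer, Ring.choose_eq_smul,
    Polynomial.descPochhammer_smeval_eq_ascPochhammer, descPochhammer_eval_eq_ascPochhammer,
    Polynomial.ascPochhammer_smeval_cast, Polynomial.ascPochhammer_smeval_eq_eval, smul_eq_mul,
    mul_inv_cancel_left₀ (by positivity)]

theorem hasSum_choose_mul_pow (a : ℝ) {x : ℝ} (hx : |x| < 1) :
    HasSum (fun n => Ring.choose a n * x ^ n) ((1 + x) ^ a) := by
  have := (one_add_rpow_hasFPowerSeriesOnBall_zero (a := a)).hasSum (y := x)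
    (by simpa [← ofReal_norm] using hx)
  simpa [binomialSeries, FormalMultilinearSeries.ofScalars_apply_eq, mul_comm] using this

theorem choose_half_two : Ring.choose (1 / 2 : ℝ) 2 = -1 / 8 := by
  norm_num [Ring.choose_eq_smul, descPochhammer_succ_right, Polynomial.smeval_mul,
    Polynomial.smeval_X, Polynomial.smeval_sub, Polynomial.smeval_one]

theorem hasSum_choose_half_mul_pow_add_two {x : ℝ} (hx : |x| < 1) :
    HasSum (fun n => Ring.choose (1 / 2 : ℝ) (n + 2) * x ^ (n + 2)) (√(1 + x) - 1 - x / 2) := by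
  have := (hasSum_nat_add_iff' 2).mpr (hasSum_choose_mul_pow (1 / 2) hx)
  rwa [← Real.sqrt_eq_rpow, Finset.sum_range_succ, Finset.sum_range_one, Ring.choose_zero_right,
    Ring.choose_one_right, pow_zero, pow_one, one_mul, ← sub_sub, one_div_mul_eq_div] at this

theorem hasSum_choose_half_add_two_mul_pow {x : ℝ} (hx : |x| < 1) :
    HasSum (fun n => Ring.choose (1 / 2 : ℝ) (n + 2) * x ^ n) (-1 / (2 * (1 + √(1 + x)) ^ 2)) := by
  rcases eq_or_ne x 0 with rfl | hx0
  · have := hasSum_single (f := fun n => Ring.choose (1 / 2 : ℝ) (n + 2) * 0 ^ n) 0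
      (fun n hn => by simp [hn])
    norm_num [choose_half_two] at this ⊢
    exact this
  have hsum := (hasSum_choose_half_mul_pow_add_two hx).div_const (x ^ 2)
  have hterm : (fun n => Ring.choose (1 / 2 : ℝ) (n + 2) * x ^ (n + 2) / x ^ 2) =
      fun n => Ring.choose (1 / 2 : ℝ) (n + 2) * x ^ n := by
    ext n
    field_simp
    ring
  have hval : (√(1 + x) - 1 - x / 2) / x ^ 2 = -1 / (2 * (1 + √(1 + x)) ^ 2) := by
    have h1x : 0 < 1 + x := by linarith [(abs_lt.mp hx).1]
    obtain ⟨s, hs0, rfl⟩ : ∃ s, 0 < s ∧ x = s ^ 2 - 1 :=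
      ⟨√(1 + x), Real.sqrt_pos.mpr h1x, by rw [Real.sq_sqrt h1x.le]; ring⟩
    have hs : √(1 + (s ^ 2 - 1)) = s := by simp [hs0.le]
    rw [hs]
    field_simp
    ring
  rwa [hterm, hval] at hsum

theorem hasDerivAt_sub_inv_sub_log_one_add_sqrt {x : ℝ} (hx : -1 < x) :
    HasDerivAt (fun y => 1 / 2 - (1 + √(1 + y))⁻¹ + log 2 - log (1 + √(1 + y)))
      (-1 / (2 * (1 + √(1 + x)) ^ 2)) x := by
  have h1x : 0 < 1 + x := by linarith
  have hsqrt : HasDerivAt (fun y => 1 + √(1 + y)) (1 / (2 * √(1 + x))) x := by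
    simpa using (((hasDerivAt_id x).const_add 1).sqrt h1x.ne').const_add 1
  have hpos : 1 + √(1 + x) ≠ 0 := by positivity
  refine ((((hsqrt.inv hpos).const_sub (1 / 2)).add_const (log 2)).sub
    (hsqrt.log hpos)).congr_deriv ?_
  field_simp
  ring

theorem tsum_choose_half_add_two_mul_pow_succ_div {x : ℝ} (hx : |x| < 1) :
    ∑' n : ℕ, Ring.choose (1 / 2 : ℝ) (n + 2) * x ^ (n + 1) / (n + 1) =
      1 / 2 - (1 + √(1 + x))⁻¹ + log 2 - log (1 + √(1 + x)) := by
  obtain ⟨r, hxr, hr1⟩ := exists_between hx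
  have hr0 : 0 < r := (abs_nonneg x).trans_lt hxr
  have hsum := (hasSum_choose_half_add_two_mul_pow (abs_lt.mpr ⟨by linarith, hr1⟩)).summable
  have hseries (y : ℝ) (hy : y ∈ Ioo (-r) r) :
      HasDerivAt (fun y => ∑' n : ℕ, Ring.choose (1 / 2 : ℝ) (n + 2) * y ^ (n + 1) / (n + 1))
        (-1 / (2 * (1 + √(1 + y)) ^ 2)) y := by
    rw [← (hasSum_choose_half_add_two_mul_pow ((abs_lt.mpr hy).trans hr1)).tsum_eq]
    exact hasDerivAt_tsum_mul_pow_succ_div hsum (abs_lt.mpr hy)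
  have hclosed (y : ℝ) (hy : y ∈ Ioo (-r) r) :=
    hasDerivAt_sub_inv_sub_log_one_add_sqrt (x := y) (by linarith [hy.1])
  refine isOpen_Ioo.eqOn_of_deriv_eq isPreconnected_Ioo
    (fun y hy => (hseries y hy).differentiableAt.differentiableWithinAt)
    (fun y hy => (hclosed y hy).differentiableAt.differentiableWithinAt)
    (fun y hy => by rw [(hseries y hy).deriv, (hclosed y hy).deriv]) (x := 0)
    ⟨neg_lt_zero.mpr hr0, hr0⟩ (by norm_num) (abs_lt.mp hxr)

theorem s1_term_eq (n : ℕ) (x : ℝ) :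
    poch (-(1/2)) (n + 2) * (1/2 - ((n:ℝ) + 2)) / ((((n + 2)!) : ℝ) * (1 - ((n:ℝ) + 2))) *
        (-x) ^ (n + 2) =
      Ring.choose (1 / 2 : ℝ) (n + 2) * x ^ (n + 2) +
        x / 2 * (Ring.choose (1 / 2 : ℝ) (n + 2) * x ^ (n + 1) / (n + 1)) := by
  have hsign : ((-1 : ℝ) ^ (n + 2)) ^ 2 = 1 := by rw [← pow_mul, mul_comm, pow_mul]; norm_num
  have hn : (1 : ℝ) - (n + 2) ≠ 0 := by linarith [n.cast_nonneg (α := ℝ)]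
  rw [poch_neg, neg_pow x]
  field_simp
  rw [hsign]
  ring

theorem s1_eq (x : ℝ) (hx : x ∈ Set.Ioo (0:ℝ) 1) :
    (∑' j : ℕ, poch (-(1/2)) (j + 2) * (1/2 - ((j:ℝ) + 2)) /
        ((((j + 2)!) : ℝ) * (1 - ((j:ℝ) + 2))) * (-x) ^ (j + 2)) =
      (1/4) * (-2 + 2 * Real.sqrt (1 + x) +
        x * (2 * Real.log 2 - 1 - 2 * Real.log (1 + Real.sqrt (1 + x)))) := by
  have hx1 : |x| < 1 := abs_lt.mpr ⟨by linarith [hx.1], hx.2⟩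
  have hpow := hasSum_choose_half_mul_pow_add_two hx1
  have hanti := summable_mul_pow_succ_div
    (hasSum_choose_half_add_two_mul_pow hx1).summable (abs_of_pos hx.1).le
  rw [tsum_congr (s1_term_eq · x), hpow.summable.tsum_add (hanti.mul_left (x / 2)),
    hpow.tsum_eq, tsum_mul_left, tsum_choose_half_add_two_mul_pow_succ_div hx1]
  have hs2 : √(1 + x) ^ 2 = 1 + x := Real.sq_sqrt (by linarith [hx.1])
  field_simp
  linear_combination 8 * hs2
end

section
/- For all λ ∈ (0,1), k ∈ (0,1), every integer N ≥ 1, and β = (1−λ²)/(1−k²), if the tail T := ∑_{n=N}^∞ (1−k²)^{n+1} [ (1/2)∫₀^β t^n/√(t(1+t)) dt + (k²/2)∫₀^β t^{n+1/2}/√(1+t) dt ], then T ≤ ((1−λ²)^{N+1}(λ² + β + 1/N)) / (2(N+1)λ²√(β(1+β))). -/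
/-!
Both integrals are of the form `∫₀^β t^(p-1/2) / √(1+t) dt` (with `p = n` and `p = n + 1`), and
`F t = t^(p+1/2) / (p √(1+t))` is an antiderivative of `t^(p-1/2) / √(1+t)` plus the nonnegative
term `t^(p-1/2) / (2p (1+t)^(3/2))`, so each integral is at most `F β`. Since `(1-k²) β = 1-λ²`,
the `n`-th term of the tail is then at most a constant times `(1-λ²)^n`, and summing the geometric
series yields the factor `1/λ²`; finally `1 + 1/N + k² β = λ² + β + 1/N`.
-/

open Real intervalIntegral MeasureTheory Set

theorem hasDerivAt_rpow_add_half_div_sqrt_one_add {p t : ℝ} (hp : 0 < p) (ht : 0 < t) :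
    HasDerivAt (fun t => t ^ (p + 1/2) / √(1 + t) / p)
      (t ^ (p - 1/2) / √(1 + t) + t ^ (p - 1/2) / (2 * p * (1 + t) * √(1 + t))) t := by
  have h1t : 0 < 1 + t := by linarith
  have hnum := hasDerivAt_rpow_const (x := t) (p := p + 1/2) (Or.inl ht.ne')
  have hden := ((hasDerivAt_id t).const_add 1).sqrt h1t.ne'
  refine ((hnum.div hden (by positivity)).div_const p).congr_deriv ?_
  have hpow : t ^ (p + 1/2) = t * t ^ (p - 1/2) := by
    rw [show p + 1/2 = 1 + (p - 1/2) by ring, rpow_add ht, rpow_one]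
  rw [show p + 1/2 - 1 = p - 1/2 by ring, hpow]
  simp only [id]
  field_simp
  linear_combination t * sq_sqrt h1t.le

theorem integral_rpow_sub_half_div_sqrt_one_add_le {p β : ℝ} (hp : 0 < p) (hβ : 0 ≤ β) :
    ∫ t in 0..β, t ^ (p - 1/2) / √(1 + t) ≤ β ^ (p + 1/2) / √(1 + β) / p := by
  have hcont : ContinuousOn (fun t => t ^ (p + 1/2) / √(1 + t) / p) (Icc 0 β) := by
    refine (ContinuousOn.div ?_ (by fun_prop) fun t ht => ?_).div_const p
    · exact (continuous_id.rpow_const fun _ => Or.inr (by linarith)).continuousOn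
    · have : 0 < 1 + t := by linarith [ht.1]
      positivity
  have hint : IntegrableOn (fun t => t ^ (p - 1/2) / √(1 + t)) (Icc 0 β) := by
    rw [← intervalIntegrable_iff_integrableOn_Icc_of_le hβ]
    simp_rw [div_eq_mul_inv]
    refine (intervalIntegrable_rpow' (by linarith)).mul_continuousOn
      (ContinuousOn.inv₀ (by fun_prop) fun t ht => ?_)
    rw [uIcc_of_le hβ] at ht
    have : 0 < 1 + t := by linarith [ht.1]
    positivity
  have key := integral_le_sub_of_hasDeriv_right_of_le hβ hcont
    (fun t ht => (hasDerivAt_rpow_add_half_div_sqrt_one_add hp ht.1).hasDerivWithinAt) hint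
    (fun t ht => le_add_of_nonneg_right (by have := ht.1; positivity))
  rwa [zero_rpow (by linarith), zero_div, zero_div, sub_zero] at key

theorem rpow_sub_half_div_sqrt_one_add {x : ℝ} (hx : 0 < x) (p : ℝ) :
    x ^ (p - 1/2) / √(1 + x) = x ^ p / √(x * (1 + x)) := by
  rw [sqrt_mul hx.le, sqrt_eq_rpow x, ← div_div, ← rpow_sub hx]

theorem integral_pow_div_sqrt_mul_one_add_le {β : ℝ} (hβ : 0 < β) {n : ℕ} (hn : 0 < n) :
    ∫ t in 0..β, t ^ n / √(t * (1 + t)) ≤ β ^ (n + 1) / √(β * (1 + β)) / n := by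
  have hI : ∫ t in 0..β, t ^ n / √(t * (1 + t)) = ∫ t in 0..β, t ^ ((n : ℝ) - 1/2) / √(1 + t) :=
    integral_congr_ae <| .of_forall fun t ht => by
      rw [uIoc_of_le hβ.le] at ht
      rw [rpow_sub_half_div_sqrt_one_add ht.1, rpow_natCast]
  have h := integral_rpow_sub_half_div_sqrt_one_add_le (p := n) (by positivity) hβ.le
  rw [show (n : ℝ) + 1/2 = n + 1 - 1/2 by ring, rpow_sub_half_div_sqrt_one_add hβ] at h
  rw [hI]
  exact_mod_cast h

theorem integral_rpow_add_half_div_sqrt_one_add_le {β : ℝ} (hβ : 0 < β) (n : ℕ) :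
    ∫ t in 0..β, t ^ ((n : ℝ) + 1/2) / √(1 + t) ≤ β ^ (n + 2) / √(β * (1 + β)) / (n + 1) := by
  have h := integral_rpow_sub_half_div_sqrt_one_add_le (p := n + 1) (by positivity) hβ.le
  rw [show (n : ℝ) + 1 - 1/2 = n + 1/2 by ring, show (n : ℝ) + 1 + 1/2 = n + 2 - 1/2 by ring,
    rpow_sub_half_div_sqrt_one_add hβ] at h
  exact_mod_cast h

theorem tsum_le_of_le_geometric {f : ℕ → ℝ} {C r : ℝ} (hf₀ : ∀ m, 0 ≤ f m)
    (hf : ∀ m, f m ≤ C * r ^ m) (hr₀ : 0 ≤ r) (hr₁ : r < 1) : ∑' m, f m ≤ C / (1 - r) := by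
  have hg := (hasSum_geometric_of_lt_one hr₀ hr₁).mul_left C
  rw [div_eq_mul_inv, ← hg.tsum_eq]
  exact (hg.summable.of_nonneg_of_le hf₀ hf).tsum_le_tsum hf hg.summable

noncomputable def tailTerm (k β : ℝ) (n : ℕ) : ℝ :=
  (1 - k ^ 2) ^ (n + 1) *
    ((1/2) * (∫ t in (0:ℝ)..β, t ^ n / √(t * (1 + t))) +
      (k ^ 2 / 2) * ∫ t in (0:ℝ)..β, t ^ ((n : ℝ) + 1/2) / √(1 + t))

theorem tailTerm_nonneg {k β : ℝ} (hk : k ^ 2 ≤ 1) (hβ : 0 ≤ β) (n : ℕ) : 0 ≤ tailTerm k β n := by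
  have h₁ : 0 ≤ ∫ t in (0:ℝ)..β, t ^ n / √(t * (1 + t)) :=
    integral_nonneg hβ fun t ht => by have := ht.1; positivity
  have h₂ : 0 ≤ ∫ t in (0:ℝ)..β, t ^ ((n : ℝ) + 1/2) / √(1 + t) :=
    integral_nonneg hβ fun t ht => by have := ht.1; positivity
  have hc : 0 ≤ 1 - k ^ 2 := by linarith
  unfold tailTerm
  positivity

theorem tailTerm_le {k β : ℝ} (hk : k ^ 2 ≤ 1) (hβ : 0 < β) {N n : ℕ} (hN : 0 < N) (hNn : N ≤ n) :
    tailTerm k β n ≤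
      ((1 - k ^ 2) * β) ^ (n + 1) * (1 / (2 * N) + k ^ 2 * β / (2 * (N + 1))) /
        √(β * (1 + β)) := by
  have hc : 0 ≤ 1 - k ^ 2 := by linarith
  have hN' : (0 : ℝ) < N := by exact_mod_cast hN
  have hNn' : (N : ℝ) ≤ n := by exact_mod_cast hNn
  calc tailTerm k β n
      ≤ (1 - k ^ 2) ^ (n + 1) * ((1/2) * (β ^ (n + 1) / √(β * (1 + β)) / n) +
          (k ^ 2 / 2) * (β ^ (n + 2) / √(β * (1 + β)) / (n + 1))) := by
        unfold tailTerm
        gcongr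
        · exact integral_pow_div_sqrt_mul_one_add_le hβ (hN.trans_le hNn)
        · exact integral_rpow_add_half_div_sqrt_one_add_le hβ n
    _ ≤ (1 - k ^ 2) ^ (n + 1) * ((1/2) * (β ^ (n + 1) / √(β * (1 + β)) / N) +
          (k ^ 2 / 2) * (β ^ (n + 2) / √(β * (1 + β)) / (N + 1))) := by
        gcongr
    _ = _ := by
        rw [mul_pow]
        field_simp
        ring

theorem tail_bound_second (lam k : ℝ) (hlam : lam ∈ Set.Ioo (0:ℝ) 1)
    (hk : k ∈ Set.Ioo (0:ℝ) 1) (N : ℕ) (hN : 1 ≤ N)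
    (beta : ℝ) (hbeta : beta = (1 - lam ^ 2) / (1 - k ^ 2)) :
    (∑' m : ℕ, (1 - k ^ 2) ^ (N + m + 1) *
        ((1/2) * (∫ t in (0:ℝ)..beta, t ^ (N + m) / Real.sqrt (t * (1 + t))) +
          (k ^ 2 / 2) * ∫ t in (0:ℝ)..beta, t ^ ((N + m : ℕ) + 1/2 : ℝ) / Real.sqrt (1 + t))) ≤
      (1 - lam ^ 2) ^ (N + 1) * (lam ^ 2 + beta + 1 / N) /
        (2 * (N + 1) * lam ^ 2 * Real.sqrt (beta * (1 + beta))) := by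
  obtain ⟨hlam₀, hlam₁⟩ := hlam
  obtain ⟨hk₀, hk₁⟩ := hk
  have hk2 : k ^ 2 < 1 := by nlinarith
  have hβ : 0 < beta := by rw [hbeta]; apply div_pos <;> nlinarith
  have hr : (1 - k ^ 2) * beta = 1 - lam ^ 2 := by
    rw [hbeta, mul_div_cancel₀ _ (sub_pos.2 hk2).ne']
  change ∑' m, tailTerm k beta (N + m) ≤ _
  calc ∑' m, tailTerm k beta (N + m)
      ≤ (1 - lam ^ 2) ^ (N + 1) * (1 / (2 * N) + k ^ 2 * beta / (2 * (N + 1))) /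
          √(beta * (1 + beta)) / (1 - (1 - lam ^ 2)) := by
        refine tsum_le_of_le_geometric (fun m => tailTerm_nonneg hk2.le hβ.le _) (fun m => ?_)
          (by nlinarith) (by nlinarith)
        refine (tailTerm_le hk2.le hβ hN (Nat.le_add_right N m)).trans_eq ?_
        rw [hr, show N + m + 1 = N + 1 + m by ring, pow_add]
        ring
    _ = _ := by
        have hlam2 : lam ^ 2 ≠ 0 := by positivity
        field_simp
        linear_combination -(lam ^ 2 * (1 - lam ^ 2) ^ (N + 1) * N) * hr
end
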